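/- arXiv:2512.07008 — 4 statements merged into one kernel-verified Lean document; each statement's English description precedes it below -/
import Mathlib

section
/- For n ≥ 4 and 1 ≤ ℓ ≤ n-3, the total number of ℓ-valleys over all Catalan words of length n equals C(2n-2ℓ-1, n-ℓ-3). -/
/-!
Cutting a Catalan word at an ℓ-valley `a, b^ℓ, b+1` leaves a Catalan word `u` ending in the
letter `a > b` and a tail `(b+1) :: s` that only has to respect the step condition; the block
`b^ℓ` is forced, so the count depends only on `m = n - ℓ`. Both pieces are counted by the ballot
numbers `ballot j c = C(2j+c, j) - C(2j+c, j+c+1)`, whose generating function is the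
`(c+1)`-st power of the Catalan series. Summing over `a` collapses a diagonal of ballot numbers,
summing over the cut position is a convolution, and the final sum over `b` telescopes to
`C(2m-1, m-3)`.
-/
def IsCatalanWord (w : List ℕ) : Prop :=
  (∀ x ∈ w, 0 < x) ∧ (0 < w.length → w.getD 0 0 = 1) ∧
    ∀ i, i + 1 < w.length → w.getD (i + 1) 0 ≤ w.getD i 0 + 1

open Finset PowerSeries

lemma card_biUnion_of_label {ι α : Type*} [DecidableEq α] {s : Finset ι} {t : ι → Finset α}
    (label : α → ι) (h : ∀ i ∈ s, ∀ x ∈ t i, label x = i) :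
    #(s.biUnion t) = ∑ i ∈ s, #(t i) :=
  card_biUnion fun i hi j hj hij => disjoint_left.2 fun x hxi hxj =>
    hij ((h i hi x hxi).symm.trans (h j hj x hxj))

lemma sum_Icc_eq_sum_antidiagonal {M : Type*} [AddCommMonoid M] (f : ℕ → ℕ → M) {a n : ℕ}
    (h : a ≤ n) :
    ∑ k ∈ Icc a n, f (k - a) (n - k) = ∑ p ∈ antidiagonal (n - a), f p.1 p.2 := by
  rw [Nat.sum_antidiagonal_eq_sum_range_succ, ← Ico_add_one_right_eq_Icc, sum_Ico_eq_sum_range]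
  exact sum_congr (by congr 1; omega) fun i _ => by congr 1 <;> omega

def ballot (j c : ℕ) : ℤ := (2 * j + c).choose j - (2 * j + c).choose (j + c + 1)

lemma ballot_zero_left (c : ℕ) : ballot 0 c = 1 := by
  simp [ballot]

lemma ballot_succ_succ (j c : ℕ) :
    ballot (j + 1) (c + 1) = ballot (j + 1) c + ballot j (c + 2) := by
  simp only [ballot, show 2 * (j + 1) + (c + 1) = 2 * j + c + 2 + 1 by ring,
    show 2 * (j + 1) + c = 2 * j + c + 2 by ring, show 2 * j + (c + 2) = 2 * j + c + 2 by ring,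
    show j + 1 + (c + 1) + 1 = j + c + 2 + 1 by ring,
    show j + (c + 2) + 1 = j + c + 2 + 1 by ring, show j + 1 + c + 1 = j + c + 2 by ring,
    Nat.choose_succ_succ', Nat.cast_add]
  ring

lemma ballot_zero_right (j : ℕ) : ballot j 0 = catalan j := by
  have hcat : ((j + 1) * catalan j : ℤ) = (2 * j).choose j := by
    exact_mod_cast succ_mul_catalan_eq_centralBinom j
  have hsucc : ((2 * j).choose (j + 1) * (j + 1) : ℤ) = (2 * j).choose j * j := by
    have := Nat.choose_succ_right_eq (2 * j) j
    rw [show 2 * j - j = j by omega] at this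
    exact_mod_cast this
  refine mul_left_cancel₀ (by positivity : ((j : ℤ) + 1) ≠ 0) ?_
  simp only [ballot, add_zero]
  linear_combination -hsucc - hcat

lemma ballot_one (j : ℕ) : ballot j 1 = ballot (j + 1) 0 := by
  simp only [ballot, show 2 * (j + 1) + 0 = 2 * j + 1 + 1 by ring,
    show j + 1 + 0 + 1 = j + 1 + 1 by ring, Nat.choose_succ_succ', Nat.cast_add]
  ring

lemma sum_Icc_ballot (j c : ℕ) : ∑ x ∈ Icc 1 (c + 1), ballot j x = ballot (j + 1) c := by
  induction c with
  | zero => simp [ballot_one]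
  | succ c ih => rw [sum_Icc_succ_top (by omega), ih, ballot_succ_succ]

lemma sum_antidiagonal_ballot (s t : ℕ) :
    ∑ p ∈ antidiagonal s, ballot p.2 (p.1 + t) = ballot s (t + 1) := by
  induction s generalizing t with
  | zero => simp [ballot_zero_left]
  | succ s ih =>
    rw [Nat.sum_antidiagonal_succ]
    simp only [show ∀ i, i + 1 + t = i + (t + 1) by omega, ih, zero_add, ballot_succ_succ]

noncomputable def ballotSeries (c : ℕ) : PowerSeries ℤ := mk (ballot · c)

lemma ballotSeries_zero : ballotSeries 0 = map (Nat.castRingHom ℤ) catalanSeries := by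
  ext j
  simp [ballotSeries, catalanSeries_coeff, ballot_zero_right]

lemma ballotSeries_zero_eq : ballotSeries 0 = 1 + X * ballotSeries 0 ^ 2 := by
  have := congrArg (map (Nat.castRingHom ℤ)) catalanSeries_sq_mul_X_add_one
  rw [ballotSeries_zero]
  simp only [map_add, map_mul, map_pow, map_X, map_one] at this
  linear_combination -this

lemma X_mul_ballotSeries_one : X * ballotSeries 1 = ballotSeries 0 - 1 := by
  ext (_ | j)
  · simp [ballotSeries, ballot_zero_left]
  · simp [ballotSeries, ballot_one]

lemma X_mul_ballotSeries_add_two (c : ℕ) :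
    X * ballotSeries (c + 2) = ballotSeries (c + 1) - ballotSeries c := by
  ext (_ | j)
  · simp [ballotSeries, ballot_zero_left]
  · simp [ballotSeries, ballot_succ_succ]

lemma ballotSeries_eq_pow (c : ℕ) : ballotSeries c = ballotSeries 0 ^ (c + 1) := by
  induction c using Nat.twoStepInduction with
  | zero => simp
  | one =>
    refine X_mul_cancel ?_
    rw [X_mul_ballotSeries_one]
    linear_combination ballotSeries_zero_eq
  | more c ih₀ ih₁ =>
    refine X_mul_cancel ?_
    rw [X_mul_ballotSeries_add_two, ih₀, ih₁]
    linear_combination ballotSeries 0 ^ (c + 1) * ballotSeries_zero_eq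

lemma sum_antidiagonal_ballot_mul_ballot (r c : ℕ) :
    ∑ p ∈ antidiagonal r, ballot p.1 c * ballot p.2 c = ballot r (2 * c + 1) := by
  have h : ballotSeries c * ballotSeries c = ballotSeries (2 * c + 1) := by
    rw [ballotSeries_eq_pow, ballotSeries_eq_pow (2 * c + 1), ← pow_add]
    ring_nf
  simpa [ballotSeries, coeff_mul] using congrArg (coeff r) h

lemma sum_Icc_ballot_sub {c k : ℕ} (hc : 1 ≤ c) (hck : c ≤ k) :
    ∑ a ∈ Icc c k, ballot (k - a) (a - 1) = ballot (k - c) c := by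
  calc ∑ a ∈ Icc c k, ballot (k - a) (a - 1)
      = ∑ a ∈ Icc c k, (fun i j => ballot j (i + (c - 1))) (a - c) (k - a) :=
        sum_congr rfl fun a ha => by have := (mem_Icc.1 ha).1; dsimp only; congr 1; omega
    _ = ballot (k - c) c := by
        rw [sum_Icc_eq_sum_antidiagonal (fun i j => ballot j (i + (c - 1))) hck,
          sum_antidiagonal_ballot, Nat.sub_add_cancel hc]

lemma sum_Icc_ballot_telescope (m : ℕ) (hm : 3 ≤ m) :
    ∑ b ∈ Icc 1 (m - 2), ballot (m - 2 - b) (2 * b + 3) = (2 * m - 1).choose (m - 3) := by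
  obtain ⟨n, rfl⟩ : ∃ n, m = n + 3 := ⟨m - 3, by omega⟩
  set f : ℕ → ℤ := fun b => (2 * n + 5).choose (n + 4 + b)
  have hterm : ∀ b ∈ Icc 1 (n + 1), ballot (n + 1 - b) (2 * b + 3) = -(f (b + 1) - f b) := by
    intro b hb
    have hb := (mem_Icc.1 hb).2
    rw [ballot, show 2 * (n + 1 - b) + (2 * b + 3) = 2 * n + 5 by omega,
      show n + 1 - b + (2 * b + 3) + 1 = n + 4 + (b + 1) by omega,
      Nat.choose_symm_of_eq_add (by omega : 2 * n + 5 = n + 1 - b + (n + 4 + b))]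
    ring
  rw [show n + 3 - 2 = n + 1 by omega, show 2 * (n + 3) - 1 = 2 * n + 5 by omega,
    show n + 3 - 3 = n by omega, sum_congr rfl hterm, ← Ico_add_one_right_eq_Icc,
    sum_neg_distrib, sum_Ico_sub f (by omega)]
  simp only [f, Nat.choose_eq_zero_of_lt (by omega : 2 * n + 5 < n + 4 + (n + 1 + 1)),
    Nat.choose_symm_of_eq_add (by omega : 2 * n + 5 = n + (n + 4 + 1))]
  ring

lemma isCatalanWord_iff {w : List ℕ} :
    IsCatalanWord w ↔ (∀ x ∈ w, 0 < x) ∧ (0 :: w).IsChain (fun x y => y ≤ x + 1) := by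
  rw [IsCatalanWord, List.isChain_cons, List.isChain_iff_getElem]
  refine and_congr_right fun hpos => and_congr ?_ ?_
  · cases w with
    | nil => simp
    | cons x t =>
      have := hpos x List.mem_cons_self
      simp only [List.length_cons, List.getD_cons_zero, List.head?_cons, Option.mem_def,
        Option.some.injEq, forall_eq']
      omega
  · refine forall_congr' fun i => forall_congr' fun hi => ?_
    simp [List.getElem?_eq_getElem hi, List.getElem?_eq_getElem (by omega : i < w.length)]

lemma isCatalanWord_append {u v : List ℕ} :
    IsCatalanWord (u ++ v) ↔ IsCatalanWord u ∧ (∀ x ∈ v, 0 < x) ∧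
      (u.getLastD 0 :: v).IsChain (fun x y => y ≤ x + 1) := by
  have hlast : (0 :: u).getLast? = some (u.getLastD 0) := by
    simp [List.getLast?_cons]
  rw [isCatalanWord_iff, isCatalanWord_iff, List.cons_append.symm]
  simp only [List.isChain_append (l₁ := 0 :: u),
    List.isChain_cons (x := u.getLastD 0), hlast, List.forall_mem_append, Option.mem_def,
    Option.some.injEq, forall_eq']
  tauto

lemma le_add_length_of_isChain {c : ℕ} {l : List ℕ}
    (h : (c :: l).IsChain (fun x y => y ≤ x + 1)) : ∀ x ∈ l, x ≤ c + l.length := by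
  induction l generalizing c with
  | nil => simp
  | cons y t ih =>
    obtain ⟨hy, ht⟩ := List.isChain_cons_cons.1 h
    have := ih ht
    simp only [List.mem_cons, List.length_cons, forall_eq_or_imp]
    exact ⟨by omega, fun x hx => by have := this x hx; omega⟩

lemma IsCatalanWord.getLastD_le_length {u : List ℕ} (hu : IsCatalanWord u) :
    u.getLastD 0 ≤ u.length := by
  rcases List.eq_nil_or_concat' u with rfl | ⟨v, x, rfl⟩
  · simp
  · simpa using le_add_length_of_isChain (isCatalanWord_iff.1 hu).2 x (by simp)

lemma isChain_cons_replicate_append {a b ℓ : ℕ} {s : List ℕ} (hba : b ≤ a)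
    (hs : ((b + 1) :: s).IsChain (fun x y => y ≤ x + 1)) :
    (a :: (List.replicate ℓ b ++ (b + 1) :: s)).IsChain (fun x y => y ≤ x + 1) := by
  induction ℓ generalizing a with
  | zero => exact List.isChain_cons_cons.2 ⟨by omega, hs⟩
  | succ ℓ ih => exact List.isChain_cons_cons.2 ⟨by omega, ih le_rfl⟩

def catalanWordsEndingAt : ℕ → ℕ → Finset (List ℕ)
  | 0, a => if a = 0 then {[]} else ∅
  | k + 1, a => if a = 0 then ∅ else
      (Icc (a - 1) k).biUnion fun a' => (catalanWordsEndingAt k a').image (· ++ [a])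

lemma mem_catalanWordsEndingAt {k a : ℕ} {u : List ℕ} :
    u ∈ catalanWordsEndingAt k a ↔ IsCatalanWord u ∧ u.length = k ∧ u.getLastD 0 = a := by
  induction k generalizing a u with
  | zero =>
    cases u <;> by_cases ha : a = 0 <;>
      simp [catalanWordsEndingAt, ha, isCatalanWord_iff, eq_comm]
  | succ k ih =>
    rcases List.eq_nil_or_concat' u with rfl | ⟨v, x, rfl⟩
    · rw [catalanWordsEndingAt]; split_ifs <;> simp
    by_cases ha : a = 0
    · simp only [catalanWordsEndingAt, if_pos ha, notMem_empty, false_iff, isCatalanWord_append]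
      rintro ⟨⟨-, hx, -⟩, -, hlast⟩
      simp only [List.mem_singleton, forall_eq, List.getLastD_concat] at hx hlast
      omega
    simp only [catalanWordsEndingAt, if_neg ha, mem_biUnion, mem_Icc, mem_image,
      List.append_singleton_inj, isCatalanWord_append, List.getLastD_concat,
      List.length_append, List.length_singleton, List.mem_singleton, forall_eq,
      List.isChain_cons_cons, List.isChain_singleton, and_true, Nat.add_right_cancel_iff]
    constructor
    · rintro ⟨a', ⟨ha₁, -⟩, v', hv', rfl, rfl⟩
      obtain ⟨hv, rfl, rfl⟩ := ih.1 hv'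
      exact ⟨⟨hv, by omega, by omega⟩, rfl, rfl⟩
    · rintro ⟨⟨hv, -, hxv⟩, rfl, rfl⟩
      exact ⟨v.getLastD 0, ⟨by omega, hv.getLastD_le_length⟩, v, ih.2 ⟨hv, rfl, rfl⟩, rfl,
        rfl⟩

lemma card_catalanWordsEndingAt_succ {k a : ℕ} (ha : a ≠ 0) :
    #(catalanWordsEndingAt (k + 1) a) = ∑ a' ∈ Icc (a - 1) k, #(catalanWordsEndingAt k a') := by
  rw [catalanWordsEndingAt, if_neg ha, card_biUnion_of_label (fun u => u.dropLast.getLastD 0)]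
  · exact sum_congr rfl fun a' _ =>
      card_image_of_injective _ fun u v h => List.append_cancel_right h
  · intro a' _ u hu
    obtain ⟨v, hv, rfl⟩ := mem_image.1 hu
    simpa using (mem_catalanWordsEndingAt.1 hv).2.2

lemma card_catalanWordsEndingAt : ∀ {k a : ℕ}, 1 ≤ a → a ≤ k →
    (#(catalanWordsEndingAt k a) : ℤ) = ballot (k - a) (a - 1)
  | 0, _, ha, hak => by omega
  | k + 1, a, ha, hak => by
    have tail : ∀ c, 1 ≤ c → c ≤ k →
        ∑ a' ∈ Icc c k, (#(catalanWordsEndingAt k a') : ℤ) = ballot (k - c) c := by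
      intro c hc hck
      rw [← sum_Icc_ballot_sub hc hck]
      exact sum_congr rfl fun a' ha' =>
        card_catalanWordsEndingAt (hc.trans (mem_Icc.1 ha').1) (mem_Icc.1 ha').2
    rw [card_catalanWordsEndingAt_succ (by omega), Nat.cast_sum]
    rcases Nat.lt_or_ge 1 a with ha₂ | ha₁
    · rw [tail (a - 1) (by omega) (by omega)]
      congr 1; omega
    obtain rfl : a = 1 := by omega
    rcases Nat.eq_zero_or_pos k with rfl | hk
    · simp [catalanWordsEndingAt, ballot_zero_left]
    have hzero : catalanWordsEndingAt k 0 = ∅ := by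
      refine eq_empty_of_forall_notMem fun u hu => ?_
      obtain ⟨hu, hlen, hlast⟩ := mem_catalanWordsEndingAt.1 hu
      obtain ⟨v, x, rfl⟩ := (List.eq_nil_or_concat' u).resolve_left
        (by rintro rfl; simp only [List.length_nil] at hlen; omega)
      simp only [List.getLastD_concat] at hlast
      simpa [hlast] using (isCatalanWord_append.1 hu).2.1
    rw [Nat.sub_self, ← add_sum_Ioc_eq_sum_Icc (Nat.zero_le k), ← Icc_add_one_left_eq_Ioc,
      hzero, zero_add, tail 1 le_rfl hk, ballot_one, Nat.sub_add_cancel hk]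
    simp

def continuations : ℕ → ℕ → Finset (List ℕ)
  | 0, _ => {[]}
  | j + 1, c => (Icc 1 (c + 1)).biUnion fun x => (continuations j x).image (x :: ·)

lemma mem_continuations {j c : ℕ} {s : List ℕ} :
    s ∈ continuations j c ↔
      s.length = j ∧ (∀ x ∈ s, 0 < x) ∧ (c :: s).IsChain (fun x y => y ≤ x + 1) := by
  induction j generalizing c s with
  | zero => cases s <;> simp [continuations]
  | succ j ih =>
    cases s with
    | nil => simp [continuations]
    | cons x t =>
      simp only [continuations, mem_biUnion, mem_Icc, mem_image, List.cons.injEq,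
        List.length_cons, List.mem_cons, forall_eq_or_imp, List.isChain_cons_cons,
        Nat.add_right_cancel_iff]
      constructor
      · rintro ⟨x, ⟨hx₁, hx₂⟩, t, ht, rfl, rfl⟩
        obtain ⟨hlen, hpos, hch⟩ := ih.1 ht
        exact ⟨hlen, ⟨hx₁, hpos⟩, hx₂, hch⟩
      · rintro ⟨hlen, ⟨hx, hpos⟩, hxc, hch⟩
        exact ⟨x, ⟨hx, hxc⟩, t, ih.2 ⟨hlen, hpos, hch⟩, rfl, rfl⟩

lemma card_continuations (j c : ℕ) : (#(continuations j c) : ℤ) = ballot j c := by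
  induction j generalizing c with
  | zero => simp [continuations, ballot_zero_left]
  | succ j ih =>
    rw [continuations, card_biUnion_of_label (fun s => s.headD 0), Nat.cast_sum, ← sum_Icc_ballot]
    · exact sum_congr rfl fun x _ => by
        rw [card_image_of_injective _ List.cons_injective, ih]
    · intro x _ s hs
      obtain ⟨t, -, rfl⟩ := mem_image.1 hs
      rfl

lemma take_drop_append_valley {u : List ℕ} (hu : u ≠ []) (s : List ℕ) (b ℓ : ℕ) :
    ((u ++ (List.replicate ℓ b ++ (b + 1) :: s)).drop (u.length - 1)).take (ℓ + 2) =
      u.getLastD 0 :: (List.replicate ℓ b ++ [b + 1]) := by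
  obtain ⟨v, a, rfl⟩ := (List.eq_nil_or_concat' u).resolve_left hu
  simp [List.take_append]

lemma IsCatalanWord.exists_eq_append_valley {w : List ℕ} {i a b ℓ : ℕ} (hw : IsCatalanWord w)
    (hpat : (w.drop i).take (ℓ + 2) = a :: (List.replicate ℓ b ++ [b + 1])) :
    ∃ u s, w = u ++ (List.replicate ℓ b ++ (b + 1) :: s) ∧ IsCatalanWord u ∧
      u.length = i + 1 ∧ u.getLastD 0 = a ∧ (∀ x ∈ s, 0 < x) ∧
      ((b + 1) :: s).IsChain (fun x y => y ≤ x + 1) := by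
  have hi : i < w.length := by
    by_contra! h
    simp [List.drop_eq_nil_of_le h] at hpat
  have hw' :
      w = (w.take i ++ [a]) ++ (List.replicate ℓ b ++ (b + 1) :: w.drop (i + (ℓ + 2))) := by
    conv_lhs => rw [← List.take_append_drop i w, ← List.take_append_drop (ℓ + 2) (w.drop i),
      hpat, List.drop_drop]
    simp
  rw [hw'] at hw
  obtain ⟨hu, hpos, hch⟩ := isCatalanWord_append.1 hw
  rw [List.getLastD_concat] at hch
  refine ⟨_, _, hw', hu, by simp [hi.le], List.getLastD_concat, fun x hx => hpos x (by simp [hx]),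
    ?_⟩
  rw [← List.cons_append] at hch
  exact (List.isChain_append.1 hch).2.1

def valleys (ℓ m : ℕ) : Finset (List ℕ × ℕ × ℕ × ℕ) :=
  (Icc 1 (m - 2)).biUnion fun b =>
    (Icc (b + 1) (m - 1)).biUnion fun k =>
      (Icc (b + 1) k).biUnion fun a =>
        (catalanWordsEndingAt k a ×ˢ continuations (m - 1 - k) (b + 1)).image
          fun us => (us.1 ++ (List.replicate ℓ b ++ (b + 1) :: us.2), k - 1, a, b)

lemma mem_valleys {ℓ m : ℕ} {w : List ℕ} {i a b : ℕ} :
    (w, i, a, b) ∈ valleys ℓ m ↔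
      IsCatalanWord w ∧ w.length = m + ℓ ∧ 1 ≤ b ∧ b < a ∧
        (w.drop i).take (ℓ + 2) = a :: (List.replicate ℓ b ++ [b + 1]) := by
  simp only [valleys, mem_biUnion, mem_image, mem_product, mem_Icc, Prod.exists, Prod.mk.injEq,
    mem_catalanWordsEndingAt, mem_continuations]
  constructor
  · rintro ⟨b, ⟨hb, -⟩, k, ⟨hbk, hk⟩, a, ⟨hba, -⟩, u, s,
      ⟨⟨hu, hulen, rfl⟩, hlen, hpos, hch⟩, rfl, rfl, rfl, rfl⟩
    have hu₀ : u ≠ [] := by rintro rfl; simp only [List.length_nil] at hulen; omega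
    have hwlen : (u ++ (List.replicate ℓ b ++ (b + 1) :: s)).length = m + ℓ := by
      simp only [List.length_append, List.length_replicate, List.length_cons]
      omega
    refine ⟨isCatalanWord_append.2 ⟨hu, ?_, isChain_cons_replicate_append (by omega) hch⟩,
      hwlen, hb, by omega, hulen ▸ take_drop_append_valley hu₀ s b ℓ⟩
    simp only [List.mem_append, List.mem_replicate, List.mem_cons]
    rintro y (⟨-, rfl⟩ | rfl | hy) <;> first | omega | exact hpos y hy
  · rintro ⟨hw, hlen, hb, hba, hpat⟩
    obtain ⟨u, s, rfl, hu, hulen, hulast, hpos, hch⟩ := hw.exists_eq_append_valley hpat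
    have hak := hulast ▸ hulen ▸ hu.getLastD_le_length
    simp only [List.length_append, List.length_replicate, List.length_cons] at hlen
    exact ⟨b, ⟨hb, by omega⟩, i + 1, ⟨by omega, by omega⟩, a, ⟨by omega, hak⟩, u, s,
      ⟨⟨hu, hulen, hulast⟩, by omega, hpos, hch⟩, rfl, rfl, rfl, rfl⟩

lemma card_valleys_eq_sum (ℓ m : ℕ) :
    #(valleys ℓ m) =
      ∑ b ∈ Icc 1 (m - 2), ∑ k ∈ Icc (b + 1) (m - 1), ∑ a ∈ Icc (b + 1) k,
        #(catalanWordsEndingAt k a) * #(continuations (m - 1 - k) (b + 1)) := by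
  rw [valleys, card_biUnion_of_label (·.2.2.2)]
  swap
  · intro b _ p hp
    simp only [mem_biUnion, mem_image] at hp
    obtain ⟨k, -, a, -, us, -, rfl⟩ := hp
    rfl
  refine sum_congr rfl fun b _ => ?_
  rw [card_biUnion_of_label (·.2.1 + 1)]
  swap
  · intro k hk p hp
    simp only [mem_biUnion, mem_image] at hp
    obtain ⟨a, -, us, -, rfl⟩ := hp
    have := (mem_Icc.1 hk).1
    dsimp only
    omega
  refine sum_congr rfl fun k _ => ?_
  rw [card_biUnion_of_label (·.2.2.1)]
  swap
  · intro a _ p hp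
    obtain ⟨us, -, rfl⟩ := mem_image.1 hp
    rfl
  refine sum_congr rfl fun a _ => ?_
  rw [card_image_of_injOn, card_product]
  rintro ⟨u, s⟩ hus ⟨u', s'⟩ hus' h
  simp only [coe_product, Set.mem_prod, mem_coe, mem_catalanWordsEndingAt] at hus hus'
  obtain ⟨rfl, h⟩ := List.append_inj (Prod.mk.inj h).1 (hus.1.2.1.trans hus'.1.2.1.symm)
  simp_all

lemma card_valleys (ℓ : ℕ) {m : ℕ} (hm : 3 ≤ m) :
    #(valleys ℓ m) = (2 * m - 1).choose (m - 3) := by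
  zify
  rw [card_valleys_eq_sum, ← sum_Icc_ballot_telescope m hm]
  push_cast
  refine sum_congr rfl fun b hb => ?_
  have hb := mem_Icc.1 hb
  calc ∑ k ∈ Icc (b + 1) (m - 1), ∑ a ∈ Icc (b + 1) k,
        (#(catalanWordsEndingAt k a) : ℤ) * #(continuations (m - 1 - k) (b + 1))
      = ∑ k ∈ Icc (b + 1) (m - 1),
          (fun i j => ballot i (b + 1) * ballot j (b + 1)) (k - (b + 1)) (m - 1 - k) := by
        refine sum_congr rfl fun k hk => ?_
        have hk := mem_Icc.1 hk
        dsimp only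
        rw [← sum_mul, card_continuations, ← sum_Icc_ballot_sub (by omega) hk.1]
        congr 1
        exact sum_congr rfl fun a ha =>
          card_catalanWordsEndingAt (by have := (mem_Icc.1 ha).1; omega) (mem_Icc.1 ha).2
    _ = ballot (m - 2 - b) (2 * b + 3) := by
        rw [sum_Icc_eq_sum_antidiagonal (fun i j => ballot i (b + 1) * ballot j (b + 1)) (by omega),
          sum_antidiagonal_ballot_mul_ballot]
        congr 1; omega

theorem total_ell_valleys_general (n ℓ : ℕ) (hn : 4 ≤ n) (hl2 : ℓ ≤ n - 3) :
    Nat.card {p : List ℕ × ℕ × ℕ × ℕ //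
        IsCatalanWord p.1 ∧ p.1.length = n ∧
        1 ≤ p.2.2.2 ∧ p.2.2.2 < p.2.2.1 ∧
        (p.1.drop p.2.1).take (ℓ + 2) =
          p.2.2.1 :: (List.replicate ℓ p.2.2.2 ++ [p.2.2.2 + 1])} =
      (2 * n - 2 * ℓ - 1).choose (n - ℓ - 3) := by
  have hvalleys : ∀ p, p ∈ valleys ℓ (n - ℓ) ↔ IsCatalanWord p.1 ∧ p.1.length = n ∧
      1 ≤ p.2.2.2 ∧ p.2.2.2 < p.2.2.1 ∧
      (p.1.drop p.2.1).take (ℓ + 2) =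
        p.2.2.1 :: (List.replicate ℓ p.2.2.2 ++ [p.2.2.2 + 1]) := by
    rintro ⟨w, i, a, b⟩
    rw [mem_valleys, Nat.sub_add_cancel (by omega)]
  rw [← Nat.card_congr (Equiv.subtypeEquivRight hvalleys), Nat.card_eq_finsetCard,
    card_valleys ℓ (by omega)]
  congr 1
  omega

/-- Total number of ℓ-valleys (occurrences of a string a, b^ℓ, b+1 with a > b ≥ 1,
at some position i) over all Catalan words of length n. -/
theorem total_ell_valleys (n ℓ : ℕ) (hn : 4 ≤ n) (hl1 : 1 ≤ ℓ) (hl2 : ℓ ≤ n - 3) :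
    Nat.card {p : List ℕ × ℕ × ℕ × ℕ //
        IsCatalanWord p.1 ∧ p.1.length = n ∧
        1 ≤ p.2.2.2 ∧ p.2.2.2 < p.2.2.1 ∧
        (p.1.drop p.2.1).take (ℓ + 2) =
          p.2.2.1 :: (List.replicate ℓ p.2.2.2 ++ [p.2.2.2 + 1])} =
      (2 * n - 2 * ℓ - 1).choose (n - ℓ - 3) :=
  total_ell_valleys_general n ℓ hn hl2
end

section
/- For n ≥ 3 and 1 ≤ ℓ ≤ n-2, the total number of ℓ-peaks over all Catalan words of length n equals C(2n-2ℓ-1, n-ℓ-2). -/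
open Finset

section Words

open List

theorem take_length_drop_eq_iff {α : Type*} {w P : List α} {i : ℕ} (hP : P ≠ []) :
    (w.drop i).take P.length = P ↔ ∃ u v, w = u ++ P ++ v ∧ u.length = i := by
  constructor
  · intro h
    have hi : i < w.length := by
      by_contra! hi
      rw [drop_eq_nil_of_le hi, take_nil] at h
      exact hP h.symm
    refine ⟨w.take i, (w.drop i).drop P.length, ?_, by simp; omega⟩
    conv_lhs => rw [← take_append_drop i w, ← take_append_drop P.length (w.drop i), h]
    rw [append_assoc]
  · rintro ⟨u, v, rfl, rfl⟩
    simp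

theorem take_two_drop_eq_pair_iff {α : Type*} {w : List α} {i : ℕ} {a b : α} :
    (w.drop i).take 2 = [a, b] ↔ w[i]? = some a ∧ w[i + 1]? = some b := by
  have h0 : w[i]? = (w.drop i)[0]? := by simp
  have h1 : w[i + 1]? = (w.drop i)[1]? := by simp
  rw [h0, h1]
  generalize w.drop i = l
  rcases l with _ | ⟨x, _ | ⟨y, l⟩⟩ <;> simp

def CatalanStep (x y : ℕ) : Prop := 0 < y ∧ y ≤ x + 1

theorem isCatalanWord_iff_isChain {w : List ℕ} :
    IsCatalanWord w ↔ (0 :: w).IsChain CatalanStep := by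
  simp only [IsCatalanWord, isChain_iff_getElem, CatalanStep, length_cons]
  constructor
  · rintro ⟨hpos, hfirst, hstep⟩ (_ | i) hi
    · simp only [getElem_cons_zero, getElem_cons_succ, zero_add]
      have := hfirst (by omega)
      rw [getD_eq_getElem _ _ (by omega)] at this
      exact ⟨hpos _ (getElem_mem _), this.le⟩
    · simp only [getElem_cons_succ]
      have := hstep i (by omega)
      rw [getD_eq_getElem _ _ (by omega), getD_eq_getElem _ _ (by omega)] at this
      exact ⟨hpos _ (getElem_mem _), this⟩
  · intro h
    refine ⟨fun x hx => ?_, fun hw => ?_, fun i hi => ?_⟩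
    · obtain ⟨i, hi, rfl⟩ := getElem_of_mem hx
      exact (h i (by omega)).1
    · rw [getD_eq_getElem _ _ hw]
      have := h 0 (by omega)
      simp only [getElem_cons_zero, getElem_cons_succ] at this
      omega
    · rw [getD_eq_getElem _ _ (by omega), getD_eq_getElem _ _ (by omega)]
      exact (h (i + 1) (by omega)).2

-- The last letter is `w.getLastD 0`; its value `0` on `[]` makes this hold for `v = []` too.
theorem isCatalanWord_append_singleton {v : List ℕ} {j : ℕ} :
    IsCatalanWord (v ++ [j]) ↔ IsCatalanWord v ∧ 0 < j ∧ j ≤ v.getLastD 0 + 1 := by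
  simp only [isCatalanWord_iff_isChain, ← cons_append, isChain_append, isChain_singleton,
    true_and]
  simp [getLast?_cons, CatalanStep]

theorem IsCatalanWord.getLastD_le_length_s5 {w : List ℕ} (hw : IsCatalanWord w) :
    w.getLastD 0 ≤ w.length := by
  induction w using List.reverseRecOn with
  | nil => simp
  | append_singleton v j ih =>
    obtain ⟨hv, -, hj⟩ := isCatalanWord_append_singleton.1 hw
    simp only [getLastD_concat, length_append, length_singleton]
    have := ih hv
    omega

theorem IsCatalanWord.pos_getLastD {w : List ℕ} (hw : IsCatalanWord w) (hne : w ≠ []) :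
    0 < w.getLastD 0 := by
  obtain ⟨v, j, rfl⟩ := eq_nil_or_concat' w |>.resolve_left hne
  simpa using (isCatalanWord_append_singleton.1 hw).2.1

theorem isChain_catalanStep_replicate_append {a b c ℓ : ℕ} {v : List ℕ} (hb : 0 < b)
    (hba : b ≤ a) (hac : a ≤ c) :
    (c :: (replicate ℓ (a + 1) ++ b :: v)).IsChain CatalanStep ↔ (b :: v).IsChain CatalanStep := by
  induction ℓ generalizing c with
  | zero =>
    rw [replicate_zero, nil_append, isChain_cons_cons]
    exact and_iff_right (show CatalanStep c b from ⟨hb, by omega⟩)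
  | succ ℓ ih =>
    rw [replicate_succ, cons_append, isChain_cons_cons, ih (Nat.le_succ a)]
    exact and_iff_right (show CatalanStep c (a + 1) from ⟨a.succ_pos, by omega⟩)

theorem isCatalanWord_plateau_iff {u v : List ℕ} {a b : ℕ} (ℓ : ℕ) (hb : 0 < b) (hba : b ≤ a) :
    IsCatalanWord (u ++ a :: (replicate ℓ (a + 1) ++ b :: v)) ↔
      IsCatalanWord (u ++ a :: b :: v) := by
  rw [isCatalanWord_iff_isChain, isCatalanWord_iff_isChain, isChain_cons_split,
    isChain_cons_split (l₂ := b :: v), isChain_catalanStep_replicate_append hb hba le_rfl,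
    ← isChain_catalanStep_replicate_append (ℓ := 0) hb hba le_rfl, replicate_zero, nil_append]

end Words

section Plateaus

open List

def peakOccurrences (ℓ n : ℕ) : Set (List ℕ × ℕ × ℕ × ℕ) :=
  {p | IsCatalanWord p.1 ∧ p.1.length = n ∧ 1 ≤ p.2.2.2 ∧ p.2.2.2 ≤ p.2.2.1 ∧
    (p.1.drop p.2.1).take (ℓ + 2) = p.2.2.1 :: (replicate ℓ (p.2.2.1 + 1) ++ [p.2.2.2])}

def weakDescentSplits (m : ℕ) : Set (List ℕ × ℕ × ℕ × List ℕ) :=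
  {q | IsCatalanWord (q.1 ++ q.2.1 :: q.2.2.1 :: q.2.2.2) ∧ q.1.length + q.2.2.2.length + 2 = m ∧
    1 ≤ q.2.2.1 ∧ q.2.2.1 ≤ q.2.1}

def insertPlateau (ℓ : ℕ) (q : List ℕ × ℕ × ℕ × List ℕ) : List ℕ × ℕ × ℕ × ℕ :=
  (q.1 ++ q.2.1 :: (replicate ℓ (q.2.1 + 1) ++ q.2.2.1 :: q.2.2.2), q.1.length, q.2.1, q.2.2.1)

theorem insertPlateau_injective (ℓ : ℕ) : Function.Injective (insertPlateau ℓ) := by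
  rintro ⟨u, a, b, v⟩ ⟨u', a', b', v'⟩ h
  simp only [insertPlateau, Prod.mk.injEq] at h
  obtain ⟨hw, hu, rfl, rfl⟩ := h
  obtain ⟨rfl, hv⟩ := append_inj hw hu
  simp_all

theorem peakOccurrences_add_eq_image (ℓ m : ℕ) :
    peakOccurrences ℓ (m + ℓ) = insertPlateau ℓ '' weakDescentSplits m := by
  ext ⟨w, i, a, b⟩
  have hP : (a :: (replicate ℓ (a + 1) ++ [b])).length = ℓ + 2 := by simp
  simp only [peakOccurrences, weakDescentSplits, insertPlateau, Set.mem_ofPred_eq, Set.mem_image,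
    Prod.exists, Prod.mk.injEq, ← hP, take_length_drop_eq_iff (cons_ne_nil _ _)]
  constructor
  · rintro ⟨hw, hlen, hb, hba, u, v, rfl, rfl⟩
    refine ⟨u, a, b, v, ⟨?_, ?_, hb, hba⟩, by simp⟩
    · simpa [← isCatalanWord_plateau_iff ℓ hb hba] using hw
    · simp only [length_append, length_cons, length_replicate, length_nil] at hlen
      omega
  · rintro ⟨u, a, b, v, ⟨hw, hlen, hb, hba⟩, rfl, rfl, rfl, rfl⟩
    have hlen' : (u ++ a :: (replicate ℓ (a + 1) ++ b :: v)).length = m + ℓ := by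
      simp only [length_append, length_cons, length_replicate]
      omega
    exact ⟨(isCatalanWord_plateau_iff ℓ hb hba).2 hw, hlen', hb, hba, u, v, by simp, rfl⟩

theorem card_peakOccurrences_add (ℓ m : ℕ) :
    Nat.card (peakOccurrences ℓ (m + ℓ)) = Nat.card (peakOccurrences 0 m) := by
  rw [peakOccurrences_add_eq_image, ← add_zero m, peakOccurrences_add_eq_image, add_zero,
    Nat.card_image_of_injective (insertPlateau_injective ℓ),
    Nat.card_image_of_injective (insertPlateau_injective 0)]

end Plateaus

def catalanWords : ℕ → Finset (List ℕ)
  | 0 => {[]}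
  | n + 1 => (catalanWords n).biUnion fun v => (Icc 1 (v.getLastD 0 + 1)).image fun j => v ++ [j]

theorem mem_catalanWords {n : ℕ} {w : List ℕ} :
    w ∈ catalanWords n ↔ IsCatalanWord w ∧ w.length = n := by
  induction n generalizing w with
  | zero =>
    simp only [catalanWords, Finset.mem_singleton, List.length_eq_zero_iff, iff_and_self]
    rintro rfl
    simp [IsCatalanWord]
  | succ n ih =>
    obtain rfl | ⟨v, j, rfl⟩ := List.eq_nil_or_concat' w
    · simp [catalanWords]
    · simp only [catalanWords, mem_biUnion, mem_image, mem_Icc, List.append_singleton_inj,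
        exists_eq_right_right, ih, isCatalanWord_append_singleton, List.length_append,
        List.length_singleton, Nat.add_right_cancel_iff, Nat.one_le_iff_ne_zero,
        Nat.pos_iff_ne_zero]
      tauto

theorem sum_catalanWords_succ {M : Type*} [AddCommMonoid M] (f : List ℕ → M) (n : ℕ) :
    ∑ w ∈ catalanWords (n + 1), f w =
      ∑ v ∈ catalanWords n, ∑ j ∈ Icc 1 (v.getLastD 0 + 1), f (v ++ [j]) := by
  rw [catalanWords, sum_biUnion]
  · exact sum_congr rfl fun v _ => sum_image fun j _ j' _ h => by simpa using h
  · intro v _ v' _ hne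
    simp only [Function.onFun, Finset.disjoint_left, mem_image]
    rintro _ ⟨j, -, rfl⟩ ⟨j', -, h⟩
    exact hne (List.append_inj_left' h rfl).symm

theorem catalanWords_one : catalanWords 1 = {[1]} := by
  decide

def weakDescents (w : List ℕ) : Finset ℕ :=
  (range (w.length - 1)).filter fun i => w.getD (i + 1) 0 ≤ w.getD i 0

theorem card_weakDescents_append_singleton {v : List ℕ} {j : ℕ} (hj : 0 < j) :
    #(weakDescents (v ++ [j])) = #(weakDescents v) + if j ≤ v.getLastD 0 then 1 else 0 := by
  obtain rfl | ⟨k, hk⟩ : v = [] ∨ ∃ k, v.length = k + 1 := by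
    cases v <;> simp
  · simp [weakDescents, hj.ne']
  · have hlast : (v ++ [j]).getD (k + 1) 0 ≤ (v ++ [j]).getD k 0 ↔ j ≤ v.getLastD 0 := by
      simp [List.getD_eq_getElem?_getD, hk, List.getLast?_eq_getElem?]
    have hprefix : (range k).filter (fun i => (v ++ [j]).getD (i + 1) 0 ≤ (v ++ [j]).getD i 0) =
        weakDescents v := by
      rw [weakDescents, hk, Nat.add_sub_cancel]
      refine filter_congr fun i hi => ?_
      rw [mem_range] at hi
      rw [List.getD_append _ _ _ _ (by omega), List.getD_append _ _ _ _ (by omega)]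
    rw [weakDescents, List.length_append, hk, List.length_singleton, Nat.add_sub_cancel,
      range_add_one, filter_insert, hprefix, if_congr hlast rfl rfl]
    split_ifs
    · exact card_insert_of_notMem fun h => by simp [weakDescents, hk] at h
    · rfl

theorem peakOccurrences_zero_eq (m : ℕ) :
    peakOccurrences 0 m = ((catalanWords m).sigma weakDescents).image
      (fun x => (x.1, x.2, x.1.getD x.2 0, x.1.getD (x.2 + 1) 0)) := by
  ext ⟨w, i, a, b⟩
  simp only [peakOccurrences, Set.mem_ofPred_eq, List.replicate_zero, List.nil_append, zero_add,
    take_two_drop_eq_pair_iff, coe_image, Set.mem_image, mem_coe, mem_sigma, mem_catalanWords,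
    weakDescents,     mem_filter, mem_range, Sigma.exists, Prod.mk.injEq]
  constructor
  · rintro ⟨hw, hlen, -, hba, ha, hb⟩
    have hi : i + 1 < w.length := (List.getElem?_eq_some_iff.1 hb).1
    have ha' : w.getD i 0 = a := by simp [List.getD_eq_getElem?_getD, ha]
    have hb' : w.getD (i + 1) 0 = b := by simp [List.getD_eq_getElem?_getD, hb]
    exact ⟨w, i, ⟨⟨hw, hlen⟩, by omega, hb' ▸ ha' ▸ hba⟩, rfl, rfl, ha', hb'⟩
  · rintro ⟨w, i, ⟨⟨hw, rfl⟩, hi, hle⟩, rfl, rfl, rfl, rfl⟩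
    rw [List.getD_eq_getElem _ _ (by omega), List.getD_eq_getElem _ _ (by omega)] at hle ⊢
    exact ⟨hw, rfl, hw.1 _ (List.getElem_mem _), hle, List.getElem?_eq_getElem _,
      List.getElem?_eq_getElem _⟩

theorem card_peakOccurrences_zero (m : ℕ) :
    Nat.card (peakOccurrences 0 m) = ∑ w ∈ catalanWords m, #(weakDescents w) := by
  rw [peakOccurrences_zero_eq, Nat.card_coe_set_eq, Set.ncard_coe_finset, card_image_of_injective,
    card_sigma]
  rintro ⟨w, i⟩ ⟨w', i'⟩ h
  simp only [Prod.mk.injEq] at h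
  obtain ⟨rfl, rfl, -⟩ := h
  rfl

section LastLetter

variable {M : Type*} [AddCommMonoid M] (f : List ℕ → M)

theorem sum_catalanWords_succ_filter_getLastD_eq (n j : ℕ) :
    ∑ w ∈ catalanWords (n + 1) with w.getLastD 0 = j + 1, f w =
      ∑ v ∈ catalanWords n with j ≤ v.getLastD 0, f (v ++ [j + 1]) := by
  rw [sum_filter, sum_catalanWords_succ, sum_filter]
  refine sum_congr rfl fun v _ => ?_
  simp only [List.getLastD_concat, sum_ite_eq', mem_Icc]
  congr 1
  simp

theorem sum_catalanWords_succ_filter_getLastD_ge (n j : ℕ) :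
    ∑ w ∈ catalanWords (n + 1) with j + 1 ≤ w.getLastD 0, f w =
      ∑ w ∈ catalanWords (n + 1) with j + 2 ≤ w.getLastD 0, f w +
        ∑ v ∈ catalanWords n with j ≤ v.getLastD 0, f (v ++ [j + 1]) := by
  rw [← sum_catalanWords_succ_filter_getLastD_eq,
    ← sum_filter_add_sum_filter_not _ fun w => j + 2 ≤ w.getLastD 0, filter_filter, filter_filter]
  congr 1 <;> exact sum_congr (filter_congr fun w _ => by omega) fun _ _ => rfl

theorem sum_catalanWords_filter_getLastD_ge_of_lt {n j : ℕ} (h : n < j) :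
    ∑ w ∈ catalanWords n with j ≤ w.getLastD 0, f w = 0 := by
  rw [filter_false_of_mem, sum_empty]
  intro w hw
  obtain ⟨hcat, rfl⟩ := mem_catalanWords.1 hw
  have := hcat.getLastD_le_length_s5
  omega

theorem sum_catalanWords_succ_filter_getLastD_ge_zero (n : ℕ) :
    ∑ w ∈ catalanWords (n + 1) with 0 ≤ w.getLastD 0, f w =
      ∑ w ∈ catalanWords (n + 1) with 1 ≤ w.getLastD 0, f w := by
  refine sum_congr (filter_congr fun w hw => ?_) fun _ _ => rfl
  obtain ⟨hw, hlen⟩ := mem_catalanWords.1 hw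
  have := hw.pos_getLastD (List.ne_nil_of_length_eq_add_one hlen)
  omega

end LastLetter

theorem eq_of_ballot_step {F G : ℕ → ℕ → ℤ} (hF₀ : ∀ n, F (n + 1) 0 = F (n + 1) 1)
    (hG₀ : ∀ n, G (n + 1) 0 = G (n + 1) 1) (h₁ : F 1 1 = G 1 1)
    (hlt : ∀ n j, n + 1 < j → F (n + 1) j = G (n + 1) j)
    -- `j ≤ n + 1` keeps the subtractions `2 * n - j` of the closed forms below from truncating.
    (hstep : ∀ n j, j ≤ n + 1 →
      F (n + 2) (j + 1) - F (n + 2) (j + 2) - F (n + 1) j =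
        G (n + 2) (j + 1) - G (n + 2) (j + 2) - G (n + 1) j)
    (n j : ℕ) : F (n + 1) j = G (n + 1) j := by
  induction n generalizing j with
  | zero =>
    match j with
    | 0 => rw [hF₀, hG₀, h₁]
    | 1 => exact h₁
    | j + 2 => exact hlt 0 _ (by omega)
  | succ n ih =>
    suffices h : ∀ j, F (n + 2) (j + 1) = G (n + 2) (j + 1) by
      rcases j with _ | j
      · rw [hF₀, hG₀, h]
      · exact h j
    intro j
    induction hd : n + 2 - j generalizing j with
    | zero => exact hlt (n + 1) _ (by omega)
    | succ d ihd =>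
      have := hstep n j (by omega)
      have := ihd (j + 1) (by omega)
      have := ih j
      linarith

theorem card_catalanWords_filter_getLastD_ge (n j : ℕ) :
    (#{w ∈ catalanWords (n + 1) | j ≤ w.getLastD 0} : ℤ) =
      (2 * (n + 1) - j).choose (n + 1) - (2 * (n + 1) - j).choose (n + 1 + 1) := by
  refine eq_of_ballot_step (F := fun n j => (#{w ∈ catalanWords n | j ≤ w.getLastD 0} : ℤ))
    (G := fun n j => ((2 * n - j).choose n : ℤ) - (2 * n - j).choose (n + 1)) ?_ ?_ ?_ ?_ ?_ n j
  · intro n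
    simp only [card_eq_sum_ones, Nat.cast_sum, sum_catalanWords_succ_filter_getLastD_ge_zero]
  · intro n
    rw [show 2 * (n + 1) - 0 = 2 * n + 1 + 1 by omega, show 2 * (n + 1) - 1 = 2 * n + 1 by omega,
      Nat.choose_succ_succ' _ n, Nat.choose_succ_succ' _ (n + 1), Nat.choose_symm_half]
    push_cast; ring
  · rw [catalanWords_one]; decide
  · intro n j h
    simp only [card_eq_sum_ones, sum_catalanWords_filter_getLastD_ge_of_lt _ h,
      Nat.choose_eq_zero_of_lt (show 2 * (n + 1) - j < n + 1 by omega),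
      Nat.choose_eq_zero_of_lt (show 2 * (n + 1) - j < n + 1 + 1 by omega), Nat.cast_zero, sub_zero]
  · intro n j hj
    obtain ⟨N, hN⟩ : ∃ N, 2 * n + 1 = j + N := ⟨2 * n + 1 - j, by omega⟩
    simp only [card_eq_sum_ones, Nat.cast_sum]
    rw [sum_catalanWords_succ_filter_getLastD_ge (n := n + 1),
      show 2 * (n + 2) - (j + 1) = N + 1 + 1 by omega,
      show 2 * (n + 2) - (j + 2) = N + 1 by omega, show 2 * (n + 1) - j = N + 1 by omega, Nat.choose_succ_succ' (N + 1) (n + 1),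
      Nat.choose_succ_succ' (N + 1) (n + 2)]
    push_cast; ring

theorem sum_catalanWords_filter_getLastD_ge_card_weakDescents (n j : ℕ) :
    ∑ w ∈ catalanWords (n + 1) with j ≤ w.getLastD 0, (#(weakDescents w) : ℤ) =
      j * (2 * (n + 1) - 1 - j).choose (n + 1) + (2 * (n + 1) - 1 - j).choose (n + 1 + 1) := by
  refine eq_of_ballot_step
    (F := fun n j => ∑ w ∈ catalanWords n with j ≤ w.getLastD 0, (#(weakDescents w) : ℤ))
    (G := fun n j => j * ((2 * n - 1 - j).choose n : ℤ) + (2 * n - 1 - j).choose (n + 1))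
    ?_ ?_ ?_ ?_ ?_ n j
  · exact sum_catalanWords_succ_filter_getLastD_ge_zero _
  · intro n
    rw [show 2 * (n + 1) - 1 - 0 = 2 * n + 1 by omega, show 2 * (n + 1) - 1 - 1 = 2 * n by omega,
      Nat.choose_succ_succ' _ (n + 1)]
    push_cast; ring
  · rw [catalanWords_one]; decide
  · intro n j h
    simp only [sum_catalanWords_filter_getLastD_ge_of_lt _ h,
      Nat.choose_eq_zero_of_lt (show 2 * (n + 1) - 1 - j < n + 1 by omega),
      Nat.choose_eq_zero_of_lt (show 2 * (n + 1) - 1 - j < n + 1 + 1 by omega), Nat.cast_zero,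
      mul_zero, add_zero]
  · intro n j hj
    obtain ⟨N, hN⟩ : ∃ N, 2 * n + 1 = j + N := ⟨2 * n + 1 - j, by omega⟩
    have hdescent : ∑ v ∈ catalanWords (n + 1) with j ≤ v.getLastD 0,
        (#(weakDescents (v ++ [j + 1])) : ℤ) =
          ∑ v ∈ catalanWords (n + 1) with j ≤ v.getLastD 0, (#(weakDescents v) : ℤ) +
            #{v ∈ catalanWords (n + 1) | j + 1 ≤ v.getLastD 0} := by
      simp only [card_weakDescents_append_singleton (Nat.succ_pos j), Nat.cast_add, sum_add_distrib,
        Nat.cast_ite, Nat.cast_one, Nat.cast_zero, sum_boole, filter_filter]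
      congr 3
      exact filter_congr fun v _ => by omega
    rw [sum_catalanWords_succ_filter_getLastD_ge (n := n + 1), hdescent,
      card_catalanWords_filter_getLastD_ge, show 2 * (n + 2) - 1 - (j + 1) = N + 1 by omega,
      show 2 * (n + 2) - 1 - (j + 2) = N by omega,
      show 2 * (n + 1) - 1 - j = N by omega, show 2 * (n + 1) - (j + 1) = N by omega,
      Nat.choose_succ_succ' N (n + 1), Nat.choose_succ_succ' N (n + 2)]
    push_cast; ring

theorem sum_card_weakDescents (n : ℕ) :
    ∑ w ∈ catalanWords (n + 1), #(weakDescents w) = (2 * n + 1).choose (n + 2) := by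
  have h := sum_catalanWords_filter_getLastD_ge_card_weakDescents n 0
  rw [filter_true_of_mem fun _ _ => Nat.zero_le _, show 2 * (n + 1) - 1 - 0 = 2 * n + 1 by omega,
    Nat.cast_zero, zero_mul, zero_add] at h
  exact_mod_cast h

theorem total_ell_peaks_general (n ℓ : ℕ) (hn : 3 ≤ n) (hl2 : ℓ ≤ n - 2) :
    Nat.card {p : List ℕ × ℕ × ℕ × ℕ //
        IsCatalanWord p.1 ∧ p.1.length = n ∧
        1 ≤ p.2.2.2 ∧ p.2.2.2 ≤ p.2.2.1 ∧
        (p.1.drop p.2.1).take (ℓ + 2) =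
          p.2.2.1 :: (List.replicate ℓ (p.2.2.1 + 1) ++ [p.2.2.2])} =
      (2 * n - 2 * ℓ - 1).choose (n - ℓ - 2) := by
  obtain ⟨k, rfl⟩ : ∃ k, n = k + 1 + 1 + ℓ := ⟨n - ℓ - 2, by omega⟩
  change Nat.card (peakOccurrences ℓ (k + 1 + 1 + ℓ)) = _
  rw [card_peakOccurrences_add, card_peakOccurrences_zero, sum_card_weakDescents,
    show 2 * (k + 1 + 1 + ℓ) - 2 * ℓ - 1 = 2 * k + 1 + 1 + 1 by omega,
    show k + 1 + 1 + ℓ - ℓ - 2 = k by omega]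
  exact Nat.choose_symm_of_eq_add (by omega)

/-- Total number of ℓ-peaks (occurrences of a string a, (a+1)^ℓ, b with a ≥ b ≥ 1,
at some position i) over all Catalan words of length n. -/
theorem total_ell_peaks (n ℓ : ℕ) (hn : 3 ≤ n) (hl1 : 1 ≤ ℓ) (hl2 : ℓ ≤ n - 2) :
    Nat.card {p : List ℕ × ℕ × ℕ × ℕ //
        IsCatalanWord p.1 ∧ p.1.length = n ∧
        1 ≤ p.2.2.2 ∧ p.2.2.2 ≤ p.2.2.1 ∧
        (p.1.drop p.2.1).take (ℓ + 2) =
          p.2.2.1 :: (List.replicate ℓ (p.2.2.1 + 1) ++ [p.2.2.2])} =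
      (2 * n - 2 * ℓ - 1).choose (n - ℓ - 2) :=
  total_ell_peaks_general n ℓ hn hl2
end

section
/- For n ≥ 1, the total number of runs of weak ascents over all Catalan words of length n equals C(2n-2, n-1). -/
namespace CatalanWord

/-- `(0 :: w).IsChain Step` is the Catalan condition on `w`: the prepended `0` forces the first
letter to be `1`. -/
def Step (a b : ℕ) : Prop := 0 < b ∧ b ≤ a + 1

theorem isCatalanWord_iff_isChain {w : List ℕ} : IsCatalanWord w ↔ (0 :: w).IsChain Step := by
  simp only [IsCatalanWord, List.isChain_iff_getElem, List.length_cons, Step]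
  constructor
  · rintro ⟨hpos, hhead, hstep⟩ (_ | i) hi
    · simp only [List.getElem_cons_zero, List.getElem_cons_succ]
      have := hhead (by omega)
      rw [List.getD_eq_getElem _ _ (by omega)] at this
      exact ⟨hpos _ (List.getElem_mem _), by omega⟩
    · simp only [List.getElem_cons_succ]
      have := hstep i (by omega)
      rw [List.getD_eq_getElem _ _ (by omega), List.getD_eq_getElem _ _ (by omega)] at this
      exact ⟨hpos _ (List.getElem_mem _), this⟩
  · intro h
    refine ⟨fun x hx => ?_, fun hw => ?_, fun i hi => ?_⟩
    · obtain ⟨k, hk, rfl⟩ := List.getElem_of_mem hx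
      have := (h k (by omega)).1
      rwa [List.getElem_cons_succ] at this
    · have := h 0 (by omega)
      simp only [List.getElem_cons_zero, List.getElem_cons_succ] at this
      rw [List.getD_eq_getElem _ _ hw]
      omega
    · have := (h (i + 1) (by omega)).2
      simp only [List.getElem_cons_succ] at this
      rwa [List.getD_eq_getElem _ _ (by omega), List.getD_eq_getElem _ _ (by omega)]

theorem step_zero_iff {b : ℕ} : Step 0 b ↔ b = 1 := by
  simp only [Step]; omega

def ofTree : BinaryTree Unit → List ℕ
  | .nil => []
  | .node _ l r => 1 :: ((ofTree l).map (· + 1) ++ ofTree r)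

theorem length_ofTree (t : BinaryTree Unit) : (ofTree t).length = t.numNodes := by
  induction t with
  | nil => rfl
  | node _ l r ihl ihr => simp [ofTree, ihl, ihr]

theorem isChain_ofTree (t : BinaryTree Unit) : (0 :: ofTree t).IsChain Step := by
  induction t with
  | nil => exact .singleton 0
  | node _ l r ihl ihr =>
    have hl : ((0 :: ofTree l).map (· + 1)).IsChain Step :=
      (List.isChain_map _).2 (ihl.imp fun a b h => by simp only [Step] at h ⊢; omega)
    have hr := List.isChain_cons.1 ihr
    refine List.IsChain.cons_cons (by simp [Step]) (hl.append hr.2 fun x _ y hy => ?_)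
    have := hr.1 y hy
    simp only [Step] at this ⊢
    omega

theorem pos_of_isChain {w : List ℕ} (h : (0 :: w).IsChain Step) : ∀ x ∈ w, 0 < x :=
  (isCatalanWord_iff_isChain.2 h).1

theorem takeWhile_append_of_isChain {u v : List ℕ} (hu : ∀ x ∈ u, x ≠ 1)
    (hv : (0 :: v).IsChain Step) :
    (u ++ v).takeWhile (· != 1) = u ∧ (u ++ v).dropWhile (· != 1) = v := by
  have hu' : ∀ x ∈ u, (x != 1) = true := by simpa using hu
  rw [List.takeWhile_append_of_pos hu', List.dropWhile_append_of_pos hu']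
  rcases v with _ | ⟨y, v⟩
  · simp
  · obtain rfl : y = 1 := step_zero_iff.1 (List.isChain_cons_cons.1 hv).1
    simp

theorem ofTree_injective : Function.Injective ofTree := by
  intro t
  induction t with
  | nil => rintro (_ | _) h <;> simp_all [ofTree]
  | node _ l r ihl ihr =>
    rintro (_ | ⟨_, l', r'⟩) h
    · simp [ofTree] at h
    simp only [ofTree, List.cons.injEq, true_and] at h
    have hne : ∀ t, ∀ x ∈ (ofTree t).map (· + 1), x ≠ 1 := fun t x hx => by
      obtain ⟨y, hy, rfl⟩ := List.mem_map.1 hx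
      have := pos_of_isChain (isChain_ofTree t) y hy
      omega
    have h₁ := takeWhile_append_of_isChain (hne l) (isChain_ofTree r)
    have h₂ := takeWhile_append_of_isChain (hne l') (isChain_ofTree r')
    rw [h] at h₁
    have hl : ofTree l = ofTree l' :=
      List.map_injective_iff.2 (add_left_injective 1) (h₁.1.symm.trans h₂.1)
    rw [ihl hl, ihr (h₁.2.symm.trans h₂.2)]

theorem exists_ofTree_eq : ∀ w : List ℕ, (0 :: w).IsChain Step → ∃ t, ofTree t = w
  | [], _ => ⟨.nil, rfl⟩
  | x :: w, h => by
    obtain ⟨hx, hw⟩ := List.isChain_cons_cons.1 h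
    obtain rfl : x = 1 := step_zero_iff.1 hx
    have hpos := pos_of_isChain h
    set u := w.takeWhile (· != 1)
    set v := w.dropWhile (· != 1) with hv_def
    have hu : (0 :: u.map (· - 1)).IsChain Step := by
      have hne : ∀ y ∈ u, y ≠ 1 := fun y hy => by simpa using List.mem_takeWhile_imp hy
      refine (List.isChain_map (· - 1) (l := 1 :: u)).2 ?_
      have hprefix : (1 :: u).IsChain Step :=
        hw.prefix ((List.prefix_cons_inj 1).2 (List.takeWhile_prefix _))
      refine hprefix.imp_of_mem_tail_imp fun a b _ hb h => ?_
      have := hne b hb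
      simp only [Step] at h ⊢
      omega
    have hv : (0 :: v).IsChain Step := by
      refine List.isChain_cons.2 ⟨fun y hy => ?_, hw.tail.suffix (List.dropWhile_suffix _)⟩
      have := List.head?_dropWhile_not (· != 1) w
      rw [← hv_def, hy] at this
      simp only [bne_eq_false_iff_eq] at this
      exact step_zero_iff.2 this
    obtain ⟨l, hl⟩ := exists_ofTree_eq _ hu
    obtain ⟨r, hr⟩ := exists_ofTree_eq _ hv
    refine ⟨.node () l r, ?_⟩
    have hsucc : (u.map (· - 1)).map (· + 1) = u := by
      rw [List.map_map]
      refine (List.map_congr_left fun y hy => ?_).trans (List.map_id u)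
      have := hpos y (List.mem_cons_of_mem _ ((List.takeWhile_prefix _).subset hy))
      simp only [Function.comp_apply, id_eq]
      omega
    rw [ofTree, hl, hr, hsucc, List.takeWhile_append_dropWhile]
termination_by w => w.length
decreasing_by
  all_goals simp only [List.length_cons, List.length_map]
  · exact Nat.lt_succ_of_le (List.takeWhile_prefix _).length_le
  · exact Nat.lt_succ_of_le (List.dropWhile_suffix _).length_le

def words (m : ℕ) : Finset (List ℕ) := (BinaryTree.treesOfNumNodesEq m).image ofTree

theorem mem_words {m : ℕ} {w : List ℕ} : w ∈ words m ↔ IsCatalanWord w ∧ w.length = m := by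
  simp only [words, Finset.mem_image, BinaryTree.mem_treesOfNumNodesEq, isCatalanWord_iff_isChain]
  constructor
  · rintro ⟨t, rfl, rfl⟩
    exact ⟨isChain_ofTree t, length_ofTree t⟩
  · rintro ⟨hw, rfl⟩
    obtain ⟨t, rfl⟩ := exists_ofTree_eq w hw
    exact ⟨t, (length_ofTree t).symm, rfl⟩

theorem card_words (m : ℕ) : (words m).card = catalan m := by
  rw [words, Finset.card_image_of_injective _ ofTree_injective,
    BinaryTree.treesOfNumNodesEq_card_eq_catalan]

/-- The pairs `⟨b, v⟩` such that inserting `v` at position `b` of the Catalan word `w` yields a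
Catalan word in which `b` ends a run. -/
def slots (w : List ℕ) : Finset (Σ _ : ℕ, ℕ) :=
  (Finset.range (w.length + 1)).sigma fun b => Finset.Ioc (w.getD b 0) ((0 :: w).getD b 0 + 1)

theorem getD_le_getD_cons_add_one {a : ℕ} {w : List ℕ} (h : (a :: w).IsChain Step) (b : ℕ) :
    w.getD b 0 ≤ (a :: w).getD b 0 + 1 := by
  induction w generalizing a b with
  | nil => simp
  | cons x w ih =>
    obtain ⟨hx, hw⟩ := List.isChain_cons_cons.1 h
    cases b with
    | zero => exact hx.2
    | succ b => exact ih hw b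

theorem card_slots {w : List ℕ} (hw : (0 :: w).IsChain Step) : (slots w).card = w.length + 1 := by
  set g : ℕ → ℤ := fun b => b - (0 :: w).getD b 0
  have hterm : ∀ b ∈ Finset.range (w.length + 1),
      ((Finset.Ioc (w.getD b 0) ((0 :: w).getD b 0 + 1)).card : ℤ) = g (b + 1) - g b := by
    intro b _
    rw [Nat.card_Ioc, Nat.cast_sub (getD_le_getD_cons_add_one hw b)]
    simp only [g, List.getD_cons_succ]
    push_cast
    ring
  rw [slots, Finset.card_sigma, ← Nat.cast_inj (R := ℤ), Nat.cast_sum, Finset.sum_congr rfl hterm,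
    Finset.sum_range_sub]
  simp [g]

theorem getD_insertIdx_self {α : Type*} {w : List α} {b : ℕ} {v d : α} (hb : b ≤ w.length) :
    (w.insertIdx b v).getD b d = v := by
  simp [List.getD_eq_getElem?_getD, List.getElem?_insertIdx_self, hb]

theorem getD_insertIdx_succ {α : Type*} {w : List α} {b : ℕ} {v d : α} :
    (w.insertIdx b v).getD (b + 1) d = w.getD b d := by
  simp [List.getD_eq_getElem?_getD, List.getElem?_insertIdx_of_gt]

theorem isChain_cons_insertIdx_iff {a b v : ℕ} {w : List ℕ} (hb : b ≤ w.length)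
    (hv : w.getD b 0 < v) :
    (a :: w.insertIdx b v).IsChain Step ↔ (a :: w).IsChain Step ∧ v ≤ (a :: w).getD b 0 + 1 := by
  induction w generalizing a b with
  | nil =>
    obtain rfl : b = 0 := by simpa using hb
    have hv : 0 < v := by simpa using hv
    simp [Step, hv]
  | cons x w ih =>
    cases b with
    | zero =>
      simp only [List.getD_cons_zero] at hv
      simp only [List.insertIdx_zero, List.isChain_cons_cons, Step, List.getD_cons_zero]
      grind
    | succ b =>
      rw [List.length_cons, Nat.add_le_add_iff_right] at hb
      rw [List.getD_cons_succ] at hv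
      rw [List.insertIdx_succ_cons, List.isChain_cons_cons, ih hb hv, List.isChain_cons_cons,
        List.getD_cons_succ, and_assoc]

/-- `getD` pads with `0`, so for positive letters the last position counts as a strict descent. -/
def runEnds (n : ℕ) : Set (List ℕ × ℕ) :=
  {q | IsCatalanWord q.1 ∧ q.1.length = n ∧ q.2 < n ∧ q.1.getD (q.2 + 1) 0 < q.1.getD q.2 0}

theorem mk_mem_sigma_slots_iff {m b v : ℕ} {w : List ℕ} :
    (⟨w, b, v⟩ : Σ _ : List ℕ, Σ _ : ℕ, ℕ) ∈ (words m).sigma slots ↔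
      IsCatalanWord (w.insertIdx b v) ∧ (w.insertIdx b v).length = m + 1 ∧ b < m + 1 ∧
        (w.insertIdx b v).getD (b + 1) 0 < (w.insertIdx b v).getD b 0 := by
  simp only [Finset.mem_sigma, mem_words, slots, Finset.mem_range, Finset.mem_Ioc,
    isCatalanWord_iff_isChain, getD_insertIdx_succ]
  constructor
  · rintro ⟨⟨hw, rfl⟩, hb, hv, hv'⟩
    rw [isChain_cons_insertIdx_iff (by omega) hv, List.length_insertIdx_of_le_length (by omega),
      getD_insertIdx_self (by omega)]
    exact ⟨⟨hw, hv'⟩, rfl, hb, hv⟩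
  · rintro ⟨hw, hlen, hb, hv⟩
    have hbw : b ≤ w.length := by
      by_contra! h
      rw [List.length_insertIdx_of_length_lt h] at hlen
      omega
    rw [List.length_insertIdx_of_le_length hbw, Nat.add_right_cancel_iff] at hlen
    rw [getD_insertIdx_self hbw] at hv
    rw [isChain_cons_insertIdx_iff hbw hv] at hw
    exact ⟨⟨hw.1, hlen⟩, by omega, hv, hw.2⟩

theorem card_runEnds {n : ℕ} (hn : 1 ≤ n) :
    Nat.card (runEnds n) = n * catalan (n - 1) := by
  obtain ⟨m, rfl⟩ : ∃ m, n = m + 1 := ⟨n - 1, by omega⟩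
  let f : (words m).sigma slots → runEnds (m + 1) :=
    fun x => ⟨(x.1.1.insertIdx x.1.2.1 x.1.2.2, x.1.2.1), mk_mem_sigma_slots_iff.1 x.2⟩
  have hf : Function.Bijective f := by
    constructor
    · rintro ⟨⟨w, b, v⟩, h⟩ ⟨⟨w', b', v'⟩, h'⟩ hff
      have hpair : (w.insertIdx b v, b) = (w'.insertIdx b' v', b') := congrArg Subtype.val hff
      obtain ⟨hins, rfl⟩ := Prod.mk.inj hpair
      have hb : b ≤ w.length := by
        have := (Finset.mem_sigma.1 h).2
        simp only [slots, Finset.mem_sigma, Finset.mem_range] at this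
        omega
      obtain rfl : w = w' := by
        rw [← List.eraseIdx_insertIdx_self v (i := b) (l := w), hins, List.eraseIdx_insertIdx_self]
      obtain rfl : v = v' := by
        rw [← getD_insertIdx_self (v := v) (d := 0) hb, hins, getD_insertIdx_self hb]
      rfl
    · rintro ⟨⟨w, b⟩, hq⟩
      have hb : b < w.length := hq.2.1 ▸ hq.2.2.1
      refine ⟨⟨⟨w.eraseIdx b, b, w.getD b 0⟩, mk_mem_sigma_slots_iff.2 ?_⟩, ?_⟩
      · rwa [List.getD_eq_getElem _ _ hb, List.insertIdx_eraseIdx_getElem hb]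
      · simp only [f, List.getD_eq_getElem _ _ hb, List.insertIdx_eraseIdx_getElem hb]
  have hcard : ∀ w ∈ words m, (slots w).card = m + 1 := fun w hw => by
    obtain ⟨hcat, rfl⟩ := mem_words.1 hw
    exact card_slots (isCatalanWord_iff_isChain.1 hcat)
  rw [← Nat.card_eq_of_bijective f hf, Nat.card_eq_finsetCard, Finset.card_sigma,
    Finset.sum_congr rfl hcard, Finset.sum_const, card_words, smul_eq_mul, mul_comm,
    Nat.add_sub_cancel]

section RunStart

variable {α : Type*} [LinearOrder α] (f : ℕ → α) {a a' b : ℕ}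

theorem le_of_ascents_of_descent (ha : ∀ t, a ≤ t → t < b → f t ≤ f (t + 1)) (ha' : a' ≤ b)
    (hstart : a' = 0 ∨ f a' < f (a' - 1)) : a' ≤ a := by
  by_contra! h
  have hdesc := hstart.resolve_left (by omega)
  have := ha (a' - 1) (by omega) (by omega)
  rw [Nat.sub_add_cancel (by omega)] at this
  exact this.not_gt hdesc

theorem existsUnique_runStart (b : ℕ) :
    ∃! a, a ≤ b ∧ (∀ t, a ≤ t → t < b → f t ≤ f (t + 1)) ∧ (a = 0 ∨ f a < f (a - 1)) := by
  classical
  have hex : ∃ a, a ≤ b ∧ ∀ t, a ≤ t → t < b → f t ≤ f (t + 1) :=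
    ⟨b, le_rfl, fun t h₁ h₂ => absurd h₂ (not_lt.2 h₁)⟩
  obtain ⟨hab, hasc⟩ := Nat.find_spec hex
  refine ⟨Nat.find hex, ⟨hab, hasc, ?_⟩, fun a' ⟨ha'b, ha'asc, ha'start⟩ =>
    le_antisymm (le_of_ascents_of_descent f hasc ha'b ha'start) (Nat.find_min' hex ⟨ha'b, ha'asc⟩)⟩
  refine (Nat.eq_zero_or_pos _).imp_right fun hpos => ?_
  have hmin := Nat.find_min hex (Nat.sub_one_lt_of_lt hpos)
  push Not at hmin
  obtain ⟨t, ht₁, ht₂, hdesc⟩ := hmin (by omega)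
  obtain rfl : t = Nat.find hex - 1 := by
    by_contra h
    exact (hasc t (by omega) ht₂).not_gt hdesc
  rwa [Nat.sub_add_cancel hpos] at hdesc

end RunStart

theorem getD_succ_lt_getD_of_runEnd {w : List ℕ} {n b : ℕ} (hw : IsCatalanWord w)
    (hlen : w.length = n) (hb : b < n) (hend : b = n - 1 ∨ w.getD (b + 1) 0 < w.getD b 0) :
    w.getD (b + 1) 0 < w.getD b 0 := by
  refine hend.elim (fun h => ?_) id
  rw [List.getD_eq_default _ _ (by omega), List.getD_eq_getElem _ _ (by omega)]
  exact hw.1 _ (List.getElem_mem _)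

theorem card_runs_eq_card_runEnds (n : ℕ) :
    Nat.card {p : List ℕ × ℕ × ℕ //
        IsCatalanWord p.1 ∧ p.1.length = n ∧
        p.2.1 ≤ p.2.2 ∧ p.2.2 < n ∧
        (∀ t, p.2.1 ≤ t → t < p.2.2 → p.1.getD t 0 ≤ p.1.getD (t + 1) 0) ∧
        (p.2.1 = 0 ∨ p.1.getD p.2.1 0 < p.1.getD (p.2.1 - 1) 0) ∧
        (p.2.2 = n - 1 ∨ p.1.getD (p.2.2 + 1) 0 < p.1.getD p.2.2 0)} =
      Nat.card (runEnds n) := by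
  refine Nat.card_eq_of_bijective (fun p => ⟨(p.1.1, p.1.2.2), p.2.1, p.2.2.1, p.2.2.2.2.1,
    getD_succ_lt_getD_of_runEnd p.2.1 p.2.2.1 p.2.2.2.2.1 p.2.2.2.2.2.2.2⟩)
    ⟨?_, ?_⟩
  · rintro ⟨⟨w, a, b⟩, hp⟩ ⟨⟨w', a', b'⟩, hp'⟩ h
    obtain ⟨rfl, rfl⟩ := Prod.ext_iff.1 (Subtype.ext_iff.1 h)
    obtain rfl : a = a' := (existsUnique_runStart (w.getD · 0) b).unique
      ⟨hp.2.2.1, hp.2.2.2.2.1, hp.2.2.2.2.2.1⟩ ⟨hp'.2.2.1, hp'.2.2.2.2.1, hp'.2.2.2.2.2.1⟩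
    rfl
  · rintro ⟨⟨w, b⟩, hcat, hlen, hb, hend⟩
    obtain ⟨a, ⟨hab, hasc, hstart⟩, -⟩ := existsUnique_runStart (w.getD · 0) b
    exact ⟨⟨(w, a, b), hcat, hlen, hab, hb, hasc, hstart, .inr hend⟩, rfl⟩

end CatalanWord

/-- Total number of runs of weak ascents (maximal weakly increasing consecutive
substrings, recorded by their start-end index pairs) over all Catalan words
of length n. -/
theorem total_runs_of_weak_ascents (n : ℕ) (hn : 1 ≤ n) :
    Nat.card {p : List ℕ × ℕ × ℕ //
        IsCatalanWord p.1 ∧ p.1.length = n ∧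
        p.2.1 ≤ p.2.2 ∧ p.2.2 < n ∧
        (∀ t, p.2.1 ≤ t → t < p.2.2 → p.1.getD t 0 ≤ p.1.getD (t + 1) 0) ∧
        (p.2.1 = 0 ∨ p.1.getD p.2.1 0 < p.1.getD (p.2.1 - 1) 0) ∧
        (p.2.2 = n - 1 ∨ p.1.getD (p.2.2 + 1) 0 < p.1.getD p.2.2 0)} =
      (2 * n - 2).choose (n - 1) := by
  rw [CatalanWord.card_runs_eq_card_runEnds, CatalanWord.card_runEnds hn]
  obtain ⟨m, rfl⟩ : ∃ m, n = m + 1 := ⟨n - 1, by omega⟩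
  rw [Nat.add_sub_cancel, succ_mul_catalan_eq_centralBinom, Nat.centralBinom_eq_two_mul_choose]
  congr 1
end

section
/- For n ≥ 1, C_n = ∑_{k=0}^{⌊(n-1)/2⌋} (1/(k+1))·C(n-1,k)·C(n-k-1,k)·2^{n-2k-1}, where C_n is the n-th Catalan number. -/
/-!
Writing `C(m,k) C(m-k,k) / (k+1) = C(m,2k) C_k`, the claim with `n = m + 1` is Touchard's identity
`C_{m+1} = ∑ₖ C(m,2k) C_k 2^(m-2k)`. Its right-hand side satisfies the same first-order recurrence
`(m+3) a_{m+1} = 2(2m+3) a_m` as `C_{m+1}`: by Zeilberger's algorithm the summands satisfy this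
recurrence up to a telescoping difference, which vanishes after summation over `k`.
-/

open Finset

theorem Nat.choose_succ_mul_add_choose_mul (n k : ℕ) :
    n.choose (k + 1) * (k + 1) + n.choose k * k = n * n.choose k := by
  rw [Nat.choose_succ_right_eq]
  rcases le_or_gt k n with h | h
  · rw [← Nat.mul_add, Nat.sub_add_cancel h, Nat.mul_comm]
  · simp [Nat.choose_eq_zero_of_lt h]

theorem add_two_mul_catalan_succ (n : ℕ) :
    (n + 2) * catalan (n + 1) = 2 * (2 * n + 1) * catalan n := by
  have h := Nat.succ_mul_centralBinom_succ n
  rw [← succ_mul_catalan_eq_centralBinom, ← succ_mul_catalan_eq_centralBinom] at h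
  exact Nat.eq_of_mul_eq_mul_left n.succ_pos (by linarith)

/-- The summand `C(m,2k) C_k 2^(m-2k)` of Touchard's identity; `2^m / 4^k` avoids truncated
subtraction, and the term vanishes for `2k > m`. -/
noncomputable def touchardTerm (m k : ℕ) : ℚ :=
  m.choose (2 * k) * catalan k * 2 ^ m / 4 ^ k

/-- Zeilberger certificate for `touchardTerm`. -/
noncomputable def touchardCert (m : ℕ) : ℕ → ℚ
  | 0 => 0
  | k + 1 => m.choose (2 * k + 1) * (2 * k + 1) * catalan k * 2 ^ (m + 1) / 4 ^ k

theorem touchardTerm_eq_zero {m k : ℕ} (h : m < 2 * k) : touchardTerm m k = 0 := by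
  simp [touchardTerm, Nat.choose_eq_zero_of_lt h]

theorem touchardCert_succ_eq_zero {m k : ℕ} (h : m < 2 * k + 1) :
    touchardCert m (k + 1) = 0 := by
  simp [touchardCert, Nat.choose_eq_zero_of_lt h]

theorem touchardTerm_zeilberger (m k : ℕ) :
    2 * (2 * m + 3) * touchardTerm m k + touchardCert m k =
      (m + 3) * touchardTerm (m + 1) k + touchardCert m (k + 1) := by
  cases k with
  | zero => simp [touchardTerm, touchardCert, pow_succ]; ring
  | succ l =>
    have pascal := Nat.choose_succ_succ m (2 * l + 1)
    have absorb₁ := Nat.choose_succ_mul_add_choose_mul m (2 * l + 2)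
    have absorb₂ := Nat.choose_succ_mul_add_choose_mul m (2 * l + 1)
    have cat := add_two_mul_catalan_succ l
    simp only [touchardTerm, touchardCert]
    rw [show 2 * (l + 1) = 2 * l + 1 + 1 by ring, pascal]
    qify at absorb₁ absorb₂ cat
    push_cast
    linear_combination (2 ^ m / 4 ^ (l + 1) : ℚ) *
      (2 * catalan (l + 1) * (absorb₂ - absorb₁) - 4 * m.choose (2 * l + 1) * cat)

theorem sum_touchardTerm_succ (m : ℕ) :
    (m + 3) * ∑ k ∈ range (m + 2), touchardTerm (m + 1) k =
      2 * (2 * m + 3) * ∑ k ∈ range (m + 1), touchardTerm m k := by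
  have telescope := sum_range_sub (touchardCert m) (m + 2)
  have zeilberger : ∀ k ∈ range (m + 2), touchardCert m (k + 1) - touchardCert m k =
      2 * (2 * m + 3) * touchardTerm m k - (m + 3) * touchardTerm (m + 1) k := by
    intro k _
    linear_combination -touchardTerm_zeilberger m k
  rw [sum_congr rfl zeilberger, sum_sub_distrib, ← mul_sum, ← mul_sum,
    sum_range_succ _ (m + 1), touchardTerm_eq_zero (by omega),
    touchardCert_succ_eq_zero (by omega)] at telescope
  simp only [touchardCert] at telescope
  linarith

theorem catalan_succ_eq_sum_touchardTerm (m : ℕ) :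
    (catalan (m + 1) : ℚ) = ∑ k ∈ range (m + 1), touchardTerm m k := by
  induction m with
  | zero => simp [touchardTerm]
  | succ m ih =>
    have catalan_rec : ((m : ℚ) + 3) * catalan (m + 2) = 2 * (2 * m + 3) * catalan (m + 1) := by
      exact_mod_cast add_two_mul_catalan_succ (m + 1)
    have sum_rec := sum_touchardTerm_succ m
    rw [← ih, ← catalan_rec] at sum_rec
    exact (mul_left_cancel₀ (by positivity) sum_rec).symm

theorem touchardTerm_eq {m k : ℕ} (h : 2 * k ≤ m) :
    touchardTerm m k =
      1 / ((k : ℚ) + 1) * m.choose k * (m - k).choose k * 2 ^ (m - 2 * k) := by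
  have hchoose := Nat.choose_mul (n := m) (Nat.le_mul_of_pos_left k two_pos)
  rw [show 2 * k - k = k by omega] at hchoose
  have hcat := succ_mul_catalan_eq_centralBinom k
  rw [Nat.centralBinom_eq_two_mul_choose] at hcat
  have hpow : (2 : ℚ) ^ m = 2 ^ (m - 2 * k) * 4 ^ k := by
    rw [show (4 : ℚ) = 2 ^ 2 by norm_num, ← pow_mul, ← pow_add, Nat.sub_add_cancel h]
  qify at hchoose hcat
  rw [touchardTerm, hpow]
  field_simp
  linear_combination hchoose + (m.choose (2 * k) : ℚ) * hcat

theorem catalan_identity' (n : ℕ) (hn : 1 ≤ n) :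
    (catalan n : ℚ) =
      ∑ k ∈ Finset.range ((n - 1) / 2 + 1),
        (1 / ((k : ℚ) + 1)) * ((n - 1).choose k) * ((n - k - 1).choose k) *
          2 ^ (n - 2 * k - 1) := by
  obtain ⟨m, rfl⟩ : ∃ m, n = m + 1 := ⟨n - 1, by omega⟩
  have vanish : ∀ k ∈ range (m + 1), k ∉ range (m / 2 + 1) → touchardTerm m k = 0 := by
    intro k _ hk
    exact touchardTerm_eq_zero (by simp at hk; omega)
  rw [catalan_succ_eq_sum_touchardTerm,
    ← sum_subset (range_subset_range.2 (by omega)) vanish, Nat.add_sub_cancel]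
  refine sum_congr rfl fun k hk => ?_
  rw [touchardTerm_eq (by simp at hk; omega), show m + 1 - k - 1 = m - k by omega,
    show m + 1 - 2 * k - 1 = m - 2 * k by omega]
end
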